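/- Let X, Y be path-connected topological spaces with continuous functions f : X → ℝ, g : Y → ℝ, and let Φ : X → Y, Ψ : Y → X be continuous maps with ‖f − g∘Φ‖_∞ ≤ η and ‖g − f∘Ψ‖_∞ ≤ η, and suppose d_f(x, ΨΦ(x)) ≤ ρ for all x ∈ X and d_g(y, ΦΨ(y)) ≤ ρ for all y ∈ Y. Then for all x, x' ∈ X: |d_f(x,x') − d_g(Φ(x),Φ(x'))| ≤ 2η + 2ρ, and for all x ∈ X, y ∈ Y: |d_f(x,Ψ(y)) − d_g(Φ(x),y)| ≤ 2η + 2ρ. -/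

import Mathlib

/-!
Path-height distances form a pseudometric, and a map `Φ` with `|f - g ∘ Φ| ≤ η` pushes every
path `π` to the path `Φ ∘ π`, whose `g`-height exceeds the `f`-height of `π` by at most `2η`.
Hence `Φ` and `Ψ` distort the path-height distances by at most `2η`; routing through
`Ψ (Φ x)` (or `Φ (Ψ y)`) with the triangle inequality costs at most `ρ` at each end.
-/

open unitInterval

/-- The path-height distance (see `pathHeightDist`). -/
noncomputable def pathHeightDist {X : Type*} [TopologicalSpace X] (f : X → ℝ)
    (u v : X) : ENNReal :=
  ⨅ (π : Path u v), EMetric.diam (Set.range fun t : I => f (π t))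

open ENNReal Metric Set

theorem Metric.ediam_range_le_ediam_range_add {ι α : Type*} [PseudoEMetricSpace α]
    {F G : ι → α} {δ : ℝ≥0∞} (h : ∀ i, edist (G i) (F i) ≤ δ) :
    ediam (range G) ≤ ediam (range F) + 2 * δ := by
  refine ediam_le ?_
  rintro _ ⟨i, rfl⟩ _ ⟨j, rfl⟩
  calc edist (G i) (G j) ≤ edist (G i) (F i) + edist (F i) (F j) + edist (F j) (G j) :=
        edist_triangle4 _ _ _ _
    _ ≤ δ + ediam (range F) + δ := by
        gcongr
        · exact h i
        · exact edist_le_ediam_of_mem (mem_range_self i) (mem_range_self j)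
        · rw [edist_comm]; exact h j
    _ = ediam (range F) + 2 * δ := by ring

section PathHeight

variable {X Y : Type*} [TopologicalSpace X] [TopologicalSpace Y]

theorem pathHeightDist_comm (f : X → ℝ) (u v : X) :
    pathHeightDist f u v = pathHeightDist f v u := by
  suffices ∀ u v : X, pathHeightDist f v u ≤ pathHeightDist f u v from
    le_antisymm (this v u) (this u v)
  intro u v
  refine le_iInf fun π => iInf_le_of_le π.symm (le_of_eq ?_)
  have hσ : (fun t => f (π.symm t)) = (fun t => f (π t)) ∘ σ := rfl
  rw [hσ, symm_involutive.surjective.range_comp]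

theorem pathHeightDist_triangle (f : X → ℝ) (u v w : X) :
    pathHeightDist f u w ≤ pathHeightDist f u v + pathHeightDist f v w := by
  unfold pathHeightDist
  rw [ENNReal.iInf_add]
  refine le_iInf fun π₁ => ?_
  rw [ENNReal.add_iInf]
  refine le_iInf fun π₂ => iInf_le_of_le (π₁.trans π₂) ?_
  simp only [← Function.comp_def f, range_comp, Path.trans_range, image_union]
  exact ediam_union_le
    ⟨f v, mem_image_of_mem f ⟨1, π₁.target⟩, mem_image_of_mem f ⟨0, π₂.source⟩⟩

theorem pathHeightDist_le_add_add (f : X → ℝ) (u u' v v' : X) :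
    pathHeightDist f u v ≤
      pathHeightDist f u u' + pathHeightDist f u' v' + pathHeightDist f v' v :=
  (pathHeightDist_triangle f u v' v).trans <|
    add_le_add_left (pathHeightDist_triangle f u u' v') _

theorem pathHeightDist_map_le {f : X → ℝ} {g : Y → ℝ} {Φ : X → Y} (hΦ : Continuous Φ)
    {η : ℝ} (h : ∀ x, |f x - g (Φ x)| ≤ η) (u v : X) :
    pathHeightDist g (Φ u) (Φ v) ≤ pathHeightDist f u v + ENNReal.ofReal (2 * η) := by
  have hedist : ∀ x, edist (g (Φ x)) (f x) ≤ ENNReal.ofReal η := fun x => by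
    rw [edist_dist, Real.dist_eq, abs_sub_comm]
    exact ofReal_le_ofReal (h x)
  rw [ENNReal.ofReal_mul zero_le_two, ofReal_ofNat]
  unfold pathHeightDist
  rw [ENNReal.iInf_add]
  exact le_iInf fun π => iInf_le_of_le (π.map hΦ)
    (ediam_range_le_ediam_range_add fun t => hedist (π t))

variable {f : X → ℝ} {g : Y → ℝ} {Φ : X → Y} {Ψ : Y → X} {a r : ℝ≥0∞}

theorem pathHeightDist_le_pathHeightDist_map_add
    (hΨ : ∀ y y', pathHeightDist f (Ψ y) (Ψ y') ≤ pathHeightDist g y y' + a)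
    (hΨΦ : ∀ x, pathHeightDist f x (Ψ (Φ x)) ≤ r) (x x' : X) :
    pathHeightDist f x x' ≤ pathHeightDist g (Φ x) (Φ x') + (r + a + r) :=
  calc pathHeightDist f x x'
      ≤ pathHeightDist f x (Ψ (Φ x)) + pathHeightDist f (Ψ (Φ x)) (Ψ (Φ x'))
          + pathHeightDist f (Ψ (Φ x')) x' := pathHeightDist_le_add_add f _ _ _ _
    _ ≤ r + (pathHeightDist g (Φ x) (Φ x') + a) + r := by
        gcongr
        exacts [hΨΦ x, hΨ _ _, pathHeightDist_comm f _ _ ▸ hΨΦ x']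
    _ = _ := by ring

theorem pathHeightDist_right_le_pathHeightDist_map_add
    (hΨ : ∀ y y', pathHeightDist f (Ψ y) (Ψ y') ≤ pathHeightDist g y y' + a)
    (hΨΦ : ∀ x, pathHeightDist f x (Ψ (Φ x)) ≤ r) (x : X) (y : Y) :
    pathHeightDist f x (Ψ y) ≤ pathHeightDist g (Φ x) y + (r + a) :=
  calc pathHeightDist f x (Ψ y)
      ≤ pathHeightDist f x (Ψ (Φ x)) + pathHeightDist f (Ψ (Φ x)) (Ψ y) :=
        pathHeightDist_triangle f _ _ _
    _ ≤ r + (pathHeightDist g (Φ x) y + a) := add_le_add (hΨΦ x) (hΨ _ _)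
    _ = _ := by ring

end PathHeight

theorem distortion_estimates_general {X Y : Type*} [TopologicalSpace X] [TopologicalSpace Y]
    (f : X → ℝ) (g : Y → ℝ)
    (Φ : X → Y) (Ψ : Y → X) (hΦ : Continuous Φ) (hΨ : Continuous Ψ)
    (η ρ : ℝ) (hη : 0 ≤ η) (hρ : 0 ≤ ρ)
    (hfΦ : ∀ x, |f x - g (Φ x)| ≤ η) (hgΨ : ∀ y, |g y - f (Ψ y)| ≤ η)
    (hΨΦ : ∀ x, pathHeightDist f x (Ψ (Φ x)) ≤ ENNReal.ofReal ρ)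
    (hΦΨ : ∀ y, pathHeightDist g y (Φ (Ψ y)) ≤ ENNReal.ofReal ρ) :
    (∀ x x' : X,
      pathHeightDist f x x' ≤
          pathHeightDist g (Φ x) (Φ x') + ENNReal.ofReal (2 * η + 2 * ρ) ∧
      pathHeightDist g (Φ x) (Φ x') ≤
          pathHeightDist f x x' + ENNReal.ofReal (2 * η + 2 * ρ)) ∧
    (∀ (x : X) (y : Y),
      pathHeightDist f x (Ψ y) ≤
          pathHeightDist g (Φ x) y + ENNReal.ofReal (2 * η + 2 * ρ) ∧
      pathHeightDist g (Φ x) y ≤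
          pathHeightDist f x (Ψ y) + ENNReal.ofReal (2 * η + 2 * ρ)) := by
  have hΦ_le := pathHeightDist_map_le hΦ hfΦ
  have hΨ_le := pathHeightDist_map_le hΨ hgΨ
  have hbound : ENNReal.ofReal (2 * η + 2 * ρ) =
      ENNReal.ofReal ρ + ENNReal.ofReal (2 * η) + ENNReal.ofReal ρ := by
    rw [← ENNReal.ofReal_add hρ (by positivity), ← ENNReal.ofReal_add (by positivity) hρ]
    ring_nf
  simp only [hbound]
  refine ⟨fun x x' => ⟨pathHeightDist_le_pathHeightDist_map_add hΨ_le hΨΦ x x', ?_⟩,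
    fun x y => ⟨?_, ?_⟩⟩
  · exact (hΦ_le x x').trans (add_le_add_right (le_add_right le_add_self) _)
  · exact (pathHeightDist_right_le_pathHeightDist_map_add hΨ_le hΨΦ x y).trans
      (add_le_add_right le_self_add _)
  · rw [pathHeightDist_comm g, pathHeightDist_comm f]
    exact (pathHeightDist_right_le_pathHeightDist_map_add hΦ_le hΦΨ y x).trans
      (add_le_add_right le_self_add _)

/-- Distortion estimates: if `Φ`, `Ψ` approximately preserve function values (within `η`)
and the compositions `Ψ∘Φ`, `Φ∘Ψ` displace points by at most `ρ` in the path-height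
pseudometrics, then `|d_f(x,x') − d_g(Φx,Φx')| ≤ 2η + 2ρ` and
`|d_f(x,Ψy) − d_g(Φx,y)| ≤ 2η + 2ρ`. -/
theorem distortion_estimates {X Y : Type*} [TopologicalSpace X] [TopologicalSpace Y]
    (f : X → ℝ) (g : Y → ℝ) (hf : Continuous f) (hg : Continuous g)
    (hX : PathConnectedSpace X) (hY : PathConnectedSpace Y)
    (Φ : X → Y) (Ψ : Y → X) (hΦ : Continuous Φ) (hΨ : Continuous Ψ)
    (η ρ : ℝ) (hη : 0 ≤ η) (hρ : 0 ≤ ρ)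
    (hfΦ : ∀ x, |f x - g (Φ x)| ≤ η) (hgΨ : ∀ y, |g y - f (Ψ y)| ≤ η)
    (hΨΦ : ∀ x, pathHeightDist f x (Ψ (Φ x)) ≤ ENNReal.ofReal ρ)
    (hΦΨ : ∀ y, pathHeightDist g y (Φ (Ψ y)) ≤ ENNReal.ofReal ρ) :
    (∀ x x' : X,
      pathHeightDist f x x' ≤
          pathHeightDist g (Φ x) (Φ x') + ENNReal.ofReal (2 * η + 2 * ρ) ∧
      pathHeightDist g (Φ x) (Φ x') ≤
          pathHeightDist f x x' + ENNReal.ofReal (2 * η + 2 * ρ)) ∧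
    (∀ (x : X) (y : Y),
      pathHeightDist f x (Ψ y) ≤
          pathHeightDist g (Φ x) y + ENNReal.ofReal (2 * η + 2 * ρ) ∧
      pathHeightDist g (Φ x) y ≤
          pathHeightDist f x (Ψ y) + ENNReal.ofReal (2 * η + 2 * ρ)) :=
  distortion_estimates_general f g Φ Ψ hΦ hΨ η ρ hη hρ hfΦ hgΨ hΨΦ hΦΨ
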